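/- arXiv:math-ph/0403027 — 3 statements merged into one kernel-verified Lean document; each statement's English description precedes it below -/
import Mathlib

section
/- Let v : ℝ^m × ℝ → ℝ^m be continuously differentiable with (div_x v)(x,t) ≤ −2β for all (x,t), where β > 0 is a constant. Let φ : ℝ^m × ℝ → ℝ be a continuously differentiable solution of the transport equation ∂φ/∂t(x,t) + v(x,t)·∇φ(x,t) = 0, supported for every t in a fixed compact set K ⊆ ℝ^m. Then for all t ≥ 0, ∫_{ℝ^m} φ(x,t)² dx ≤ e^{−2βt} ∫_{ℝ^m} φ(x,0)² dx. In particular, the squared L² distance between any two such solutions decays exponentially with rate 2β. -/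
open MeasureTheory RealInnerProductSpace

/-- Spatial divergence of a time-dependent vector field on `ℝ^m`. -/
noncomputable def spatialDiv {m : ℕ}
    (v : EuclideanSpace ℝ (Fin m) × ℝ → EuclideanSpace ℝ (Fin m))
    (x : EuclideanSpace ℝ (Fin m)) (t : ℝ) : ℝ :=
  ∑ i, fderiv ℝ (fun y => v (y, t) i) x (EuclideanSpace.single i 1)

/-!
The energy `E t = ∫ φ(x,t)²` satisfies `E' = ∫ 2 φ ∂ₜφ = -∫ v · ∇(φ²) = ∫ φ² div v ≤ -2β E`:
the transport equation turns the time derivative into a spatial one, and integrating by parts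
against the compactly supported `φ(·,t)²` moves it onto `v`. Grönwall's inequality then gives
`E t ≤ e^{-2βt} E 0`.
-/

section IntegrationByParts

variable {E : Type*} [NormedAddCommGroup E] [NormedSpace ℝ E] [FiniteDimensional ℝ E]
  [MeasurableSpace E] [BorelSpace E] {μ : Measure E} [μ.IsAddHaarMeasure]

theorem integral_mul_fderiv_eq_neg_fderiv_mul_of_hasCompactSupport {f g : E → ℝ}
    (hf : ContDiff ℝ 1 f) (hg : ContDiff ℝ 1 g) (hgc : HasCompactSupport g) (u : E) :
    ∫ x, g x * fderiv ℝ f x u ∂μ = -∫ x, fderiv ℝ g x u * f x ∂μ := by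
  have hf' : Continuous fun x => fderiv ℝ f x u :=
    (hf.continuous_fderiv one_ne_zero).clm_apply continuous_const
  have hg' : Continuous fun x => fderiv ℝ g x u :=
    (hg.continuous_fderiv one_ne_zero).clm_apply continuous_const
  exact integral_mul_fderiv_eq_neg_fderiv_mul_of_integrable
    ((hg'.mul hf.continuous).integrable_of_hasCompactSupport (hgc.fderiv_apply ℝ u).mul_right)
    ((hg.continuous.mul hf').integrable_of_hasCompactSupport hgc.mul_right)
    ((hg.continuous.mul hf.continuous).integrable_of_hasCompactSupport hgc.mul_right)
    (fun x _ => hg.differentiable one_ne_zero x) (fun x _ => hf.differentiable one_ne_zero x)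

end IntegrationByParts

theorem hasDerivAt_integral_of_support_subset_isCompact {X : Type*} [TopologicalSpace X]
    [T2Space X] [MeasurableSpace X] [OpensMeasurableSpace X] {μ : Measure X}
    [IsFiniteMeasureOnCompacts μ] {F F' : X × ℝ → ℝ} (hF : Continuous F) (hF' : Continuous F')
    (hderiv : ∀ x t, HasDerivAt (fun s => F (x, s)) (F' (x, t)) t)
    {K : Set X} (hK : IsCompact K) (hsupp : ∀ t, Function.support (fun x => F (x, t)) ⊆ K)
    (t : ℝ) : HasDerivAt (fun t => ∫ x, F (x, t) ∂μ) (∫ x, F' (x, t) ∂μ) t := by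
  have hF'K : ∀ x ∉ K, ∀ s, F' (x, s) = 0 := fun x hx s => by
    have hzero : (fun s => F (x, s)) = fun _ => 0 :=
      funext fun s => Function.notMem_support.1 fun h => hx (hsupp s h)
    exact (hzero ▸ hderiv x s).unique (hasDerivAt_const s 0)
  have hint : ∀ s, Integrable (fun x => F (x, s)) μ := fun s =>
    (hF.comp (continuous_id.prodMk continuous_const)).integrable_of_hasCompactSupport
      (HasCompactSupport.of_support_subset_isCompact hK (hsupp s))
  obtain ⟨C, hC⟩ :=
    (hK.prod (isCompact_closedBall t 1)).exists_bound_of_continuousOn hF'.continuousOn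
  refine (hasDerivAt_integral_of_dominated_loc_of_deriv_le (Metric.ball_mem_nhds t one_pos)
    (bound := K.indicator fun _ => C)
    (Filter.Eventually.of_forall fun s => (hint s).aestronglyMeasurable) (hint t)
    (hF'.comp (continuous_id.prodMk continuous_const)).aestronglyMeasurable ?_
    ((integrableOn_const hK.measure_lt_top.ne).integrable_indicator hK.measurableSet)
    (Filter.Eventually.of_forall fun x s _ => hderiv x s)).2
  refine Filter.Eventually.of_forall fun x s hs => ?_
  by_cases hx : x ∈ K
  · rw [Set.indicator_of_mem hx]
    exact hC (x, s) ⟨hx, Metric.ball_subset_closedBall hs⟩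
  · simp [hx, hF'K x hx s]

theorem le_exp_mul_mul_of_hasDerivAt_le {f f' : ℝ → ℝ} {a t : ℝ}
    (hf : ∀ s, HasDerivAt f (f' s) s) (hbound : ∀ s, f' s ≤ a * f s) (ht : 0 ≤ t) :
    f t ≤ Real.exp (a * t) * f 0 := by
  have := le_gronwallBound_of_liminf_deriv_right_le (b := t) (δ := f 0) (ε := 0)
    (fun s _ => (hf s).continuousAt.continuousWithinAt)
    (fun s _ r hr => (hf s).hasDerivWithinAt.liminf_right_slope_le hr) le_rfl
    (fun s _ => by simpa using hbound s) t ⟨ht, le_rfl⟩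
  rwa [gronwallBound_ε0, sub_zero, mul_comm] at this

section Euclidean

variable {m : ℕ}

theorem EuclideanSpace.continuousLinearMap_apply_eq_sum
    (L : EuclideanSpace ℝ (Fin m) →L[ℝ] ℝ) (u : EuclideanSpace ℝ (Fin m)) :
    L u = ∑ i, u i * L (EuclideanSpace.single i 1) := by
  conv_lhs => rw [← (EuclideanSpace.basisFun (Fin m) ℝ).toBasis.sum_repr u]
  simp [map_sum]

theorem continuous_spatialDiv {v : EuclideanSpace ℝ (Fin m) × ℝ → EuclideanSpace ℝ (Fin m)}
    {t : ℝ} (hv : ContDiff ℝ 1 fun y => v (y, t)) : Continuous fun x => spatialDiv v x t :=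
  continuous_finsetSum _ fun i _ =>
    (((EuclideanSpace.proj i).contDiff.comp hv).continuous_fderiv one_ne_zero).clm_apply
      continuous_const

theorem integral_mul_spatialDiv_eq_neg_integral_fderiv
    {v : EuclideanSpace ℝ (Fin m) × ℝ → EuclideanSpace ℝ (Fin m)} {t : ℝ}
    (hv : ContDiff ℝ 1 fun y => v (y, t)) {g : EuclideanSpace ℝ (Fin m) → ℝ}
    (hg : ContDiff ℝ 1 g) (hgc : HasCompactSupport g) :
    ∫ x, g x * spatialDiv v x t = -∫ x, fderiv ℝ g x (v (x, t)) := by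
  have hvi : ∀ i, ContDiff ℝ 1 fun y => v (y, t) i := fun i =>
    (EuclideanSpace.proj i : EuclideanSpace ℝ (Fin m) →L[ℝ] ℝ).contDiff.comp hv
  have hint : ∀ i, Integrable fun x => fderiv ℝ g x (EuclideanSpace.single i 1) * v (x, t) i :=
    fun i => (((hg.continuous_fderiv one_ne_zero).clm_apply continuous_const).mul
      (hvi i).continuous).integrable_of_hasCompactSupport (hgc.fderiv_apply ℝ _).mul_right
  have hint' : ∀ i, Integrable fun x =>
      g x * fderiv ℝ (fun y => v (y, t) i) x (EuclideanSpace.single i 1) :=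
    fun i => (hg.continuous.mul (((hvi i).continuous_fderiv one_ne_zero).clm_apply
      continuous_const)).integrable_of_hasCompactSupport hgc.mul_right
  calc ∫ x, g x * spatialDiv v x t
      = ∑ i, ∫ x, g x * fderiv ℝ (fun y => v (y, t) i) x (EuclideanSpace.single i 1) := by
        simp only [spatialDiv, Finset.mul_sum]
        exact integral_finsetSum _ fun i _ => hint' i
    _ = ∑ i, -∫ x, fderiv ℝ g x (EuclideanSpace.single i 1) * v (x, t) i :=
        Finset.sum_congr rfl fun i _ =>
          integral_mul_fderiv_eq_neg_fderiv_mul_of_hasCompactSupport (hvi i) hg hgc _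
    _ = -∫ x, fderiv ℝ g x (v (x, t)) := by
        rw [Finset.sum_neg_distrib, ← integral_finsetSum _ fun i _ => hint i]
        simp_rw [EuclideanSpace.continuousLinearMap_apply_eq_sum (fderiv ℝ g _) (v (_, t)),
          mul_comm]

end Euclidean

section Transport

variable {m : ℕ} {v : EuclideanSpace ℝ (Fin m) × ℝ → EuclideanSpace ℝ (Fin m)}
  {φ : EuclideanSpace ℝ (Fin m) × ℝ → ℝ} {K : Set (EuclideanSpace ℝ (Fin m))}

theorem hasDerivAt_slice_of_contDiff (hφ : ContDiff ℝ 1 φ) (x : EuclideanSpace ℝ (Fin m))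
    (t : ℝ) : HasDerivAt (fun s => φ (x, s)) (fderiv ℝ φ (x, t) (0, 1)) t :=
  (hφ.differentiable one_ne_zero _).hasFDerivAt.comp_hasDerivAt t
    ((hasDerivAt_const t x).prodMk (hasDerivAt_id t))

theorem fderiv_apply_time_eq_neg_fderiv_apply_of_transport (hφ : ContDiff ℝ 1 φ)
    (hpde : ∀ x t, deriv (fun s => φ (x, s)) t
      + ⟪v (x, t), gradient (fun y => φ (y, t)) x⟫ = 0) (x : EuclideanSpace ℝ (Fin m))
    (t : ℝ) : fderiv ℝ φ (x, t) (0, 1) = -fderiv ℝ (fun y => φ (y, t)) x (v (x, t)) := by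
  have h := hpde x t
  rw [(hasDerivAt_slice_of_contDiff hφ x t).deriv, real_inner_comm, inner_gradient_left] at h
  linarith

theorem hasDerivAt_integral_sq_of_transport (hv : ContDiff ℝ 1 v) (hφ : ContDiff ℝ 1 φ)
    (hpde : ∀ x t, deriv (fun s => φ (x, s)) t
      + ⟪v (x, t), gradient (fun y => φ (y, t)) x⟫ = 0)
    (hK : IsCompact K) (hsupp : ∀ t, Function.support (fun x => φ (x, t)) ⊆ K) (t : ℝ) :
    HasDerivAt (fun t => ∫ x, φ (x, t) ^ 2) (∫ x, φ (x, t) ^ 2 * spatialDiv v x t) t := by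
  have hφt : ContDiff ℝ 1 fun y => φ (y, t) := hφ.comp (contDiff_prodMk_left t)
  have hderiv := hasDerivAt_integral_of_support_subset_isCompact (μ := volume)
    (F := fun p => φ p ^ 2) (F' := fun p => 2 * φ p * fderiv ℝ φ p (0, 1))
    (hφ.continuous.pow 2)
    ((continuous_const.mul hφ.continuous).mul
      ((hφ.continuous_fderiv one_ne_zero).clm_apply continuous_const))
    (fun x s => by simpa [mul_assoc] using (hasDerivAt_slice_of_contDiff hφ x s).fun_pow 2)
    hK (fun s => by simpa using hsupp s) t
  convert hderiv using 1
  rw [integral_mul_spatialDiv_eq_neg_integral_fderiv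
      (hv.comp (contDiff_prodMk_left t)) (hφt.pow 2)
      (HasCompactSupport.of_support_subset_isCompact hK (by simpa using hsupp t)),
    ← integral_neg]
  refine integral_congr_ae (Filter.Eventually.of_forall fun x => ?_)
  simp only [fderiv_fun_pow 2 (hφt.differentiable one_ne_zero x),
    fderiv_apply_time_eq_neg_fderiv_apply_of_transport hφ hpde x t]
  simp

end Transport

theorem transport_L2_contraction_general {m : ℕ} (β : ℝ)
    (v : EuclideanSpace ℝ (Fin m) × ℝ → EuclideanSpace ℝ (Fin m))
    (φ : EuclideanSpace ℝ (Fin m) × ℝ → ℝ)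
    (hv : ContDiff ℝ 1 v)
    (hdiv : ∀ x t, spatialDiv v x t ≤ -2 * β)
    (hφ : ContDiff ℝ 1 φ)
    (hpde : ∀ x t, deriv (fun s => φ (x, s)) t
      + ⟪v (x, t), gradient (fun y => φ (y, t)) x⟫ = 0)
    (K : Set (EuclideanSpace ℝ (Fin m))) (hK : IsCompact K)
    (hsupp : ∀ t, Function.support (fun x => φ (x, t)) ⊆ K) :
    ∀ t ≥ (0 : ℝ),
      ∫ x, (φ (x, t)) ^ 2 ≤ Real.exp (-2 * β * t) * ∫ x, (φ (x, 0)) ^ 2 := by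
  intro t ht
  refine le_exp_mul_mul_of_hasDerivAt_le
    (hasDerivAt_integral_sq_of_transport hv hφ hpde hK hsupp) (fun s => ?_) ht
  have hsq : HasCompactSupport fun x => φ (x, s) ^ 2 :=
    HasCompactSupport.of_support_subset_isCompact hK (by simpa using hsupp s)
  have hcont : Continuous fun x => φ (x, s) ^ 2 :=
    (hφ.comp (contDiff_prodMk_left s)).continuous.pow 2
  have hdivc := continuous_spatialDiv (hv.comp (contDiff_prodMk_left s))
  rw [← integral_const_mul]
  refine integral_mono ((hcont.mul hdivc).integrable_of_hasCompactSupport hsq.mul_right)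
    ((continuous_const.mul hcont).integrable_of_hasCompactSupport hsq.mul_left) fun x => ?_
  simpa [mul_comm] using mul_le_mul_of_nonneg_left (hdiv x s) (sq_nonneg (φ (x, s)))

theorem transport_L2_contraction {m : ℕ} (β : ℝ) (hβ : 0 < β)
    (v : EuclideanSpace ℝ (Fin m) × ℝ → EuclideanSpace ℝ (Fin m))
    (φ : EuclideanSpace ℝ (Fin m) × ℝ → ℝ)
    (hv : ContDiff ℝ 1 v)
    (hdiv : ∀ x t, spatialDiv v x t ≤ -2 * β)
    (hφ : ContDiff ℝ 1 φ)
    (hpde : ∀ x t, deriv (fun s => φ (x, s)) t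
      + ⟪v (x, t), gradient (fun y => φ (y, t)) x⟫ = 0)
    (K : Set (EuclideanSpace ℝ (Fin m))) (hK : IsCompact K)
    (hsupp : ∀ t, Function.support (fun x => φ (x, t)) ⊆ K) :
    ∀ t ≥ (0 : ℝ),
      ∫ x, (φ (x, t)) ^ 2 ≤ Real.exp (-2 * β * t) * ∫ x, (φ (x, 0)) ^ 2 :=
  transport_L2_contraction_general β v φ hv hdiv hφ hpde K hK hsupp
end

section
/- Let L > 0, Λ ≥ 0 and λ ∈ ℝ. Let a, v : [0,L] × ℝ → ℝ and A : [0,L] × ℝ → ℝ be continuously differentiable with A(x,t) ≥ Λ and −a(x,t) + ½ ∂v/∂x(x,t) ≤ λ for all (x,t) ∈ [0,L] × [0,∞). Let u : [0,L] × ℝ → ℝ be twice continuously differentiable, satisfy the reaction–convection–diffusion equation ∂u/∂t + a u + v ∂u/∂x = ∂/∂x ( A ∂u/∂x ) on [0,L] × [0,∞), and satisfy u(0,t) = u(L,t) = 0 for all t ≥ 0. Then for all t ≥ 0, ∫₀^L u(x,t)² dx ≤ e^{2(λ − Λπ²/L²) t} ∫₀^L u(x,0)² dx; in particular, if λ − Λπ²/L²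 < 0 the solution converges exponentially to zero in L². -/
/-!
Multiplying the equation by `u` and integrating by parts (`u` vanishes at both ends) gives
`d/dt ∫ u² = -2 ∫ A u_x² + ∫ (-2a + v_x) u² ≤ -2Λ ∫ u_x² + 2λ ∫ u²`.
Wirtinger's inequality `∫ u_x² ≥ (π / L)² ∫ u²` turns this into `E' ≤ 2 (λ - Λ π² / L²) E` for
`E t = ∫ u(x, t)² dx`, and Grönwall's inequality concludes.
-/

open MeasureTheory Set intervalIntegral Real
open Filter Topology

section Interval

variable {a b : ℝ} {f : ℝ → ℝ}

theorem DifferentiableOn.hasDerivAt_derivWithin_Icc (hf : DifferentiableOn ℝ f (Icc a b))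
    {x : ℝ} (hx : x ∈ Ioo a b) : HasDerivAt f (derivWithin f (Icc a b) x) x :=
  (hf x (Ioo_subset_Icc_self hx)).hasDerivWithinAt.hasDerivAt (Icc_mem_nhds hx.1 hx.2)

theorem integral_mul_deriv_eq_neg_deriv_mul_of_eq_zero {u v u' v' : ℝ → ℝ} (hab : a ≤ b)
    (hu : ∀ x ∈ Icc a b, HasDerivWithinAt u (u' x) (Icc a b) x)
    (hv : ∀ x ∈ Icc a b, HasDerivWithinAt v (v' x) (Icc a b) x)
    (hu' : ContinuousOn u' (Icc a b)) (hv' : ContinuousOn v' (Icc a b))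
    (hua : u a = 0) (hub : u b = 0) :
    ∫ x in a..b, u x * v' x = -∫ x in a..b, u' x * v x := by
  rw [← uIcc_of_le hab] at hu hv hu' hv'
  rw [integral_mul_deriv_eq_deriv_mul_of_hasDerivWithinAt hu hv
    hu'.intervalIntegrable hv'.intervalIntegrable, hua, hub]
  ring

theorem mul_integral_sq_le_integral_deriv_sq_of_riccati {k : ℝ} {f' φ : ℝ → ℝ} (hab : a ≤ b)
    (hf : ContinuousOn f (Icc a b)) (hf' : ContinuousOn f' (Icc a b))
    (hff' : ∀ x ∈ Ioo a b, HasDerivAt f (f' x) x) (hfa : f a = 0) (hfb : f b = 0)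
    (hφ : ContinuousOn φ (Icc a b)) (hφφ' : ∀ x ∈ Ioo a b, HasDerivAt φ (-k - φ x ^ 2) x) :
    k * ∫ x in a..b, f x ^ 2 ≤ ∫ x in a..b, f' x ^ 2 := by
  have hint : ∀ g : ℝ → ℝ, ContinuousOn g (Icc a b) → IntervalIntegrable g volume a b :=
    fun g hg => hg.intervalIntegrable_of_Icc hab
  set G' : ℝ → ℝ := fun x => (-k - φ x ^ 2) * (f x * f x) + φ x * (f' x * f x + f x * f' x)
  have hG'c : ContinuousOn G' (Icc a b) := by fun_prop
  -- `G'` is the derivative of `φ f²`, which vanishes at both ends, and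
  -- `f'² - k f² - G' = (f' - φ f)²`.
  have hG' : ∫ x in a..b, G' x = 0 := by
    rw [integral_eq_sub_of_hasDerivAt_of_le (f' := G') hab (hφ.mul (hf.mul hf))
      (fun x hx => (hφφ' x hx).mul ((hff' x hx).mul (hff' x hx))) (hint _ hG'c)]
    simp [hfa, hfb]
  calc k * ∫ x in a..b, f x ^ 2 = ∫ x in a..b, (k * f x ^ 2 + G' x) := by
        rw [integral_add (hint _ (by fun_prop)) (hint _ hG'c), hG',
          intervalIntegral.integral_const_mul, add_zero]
    _ ≤ ∫ x in a..b, f' x ^ 2 :=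
        integral_mono_on hab (hint _ (by fun_prop)) (hint _ (by fun_prop)) fun x _ => by
          nlinarith [sq_nonneg (f' x - φ x * f x)]

theorem hasDerivAt_mul_cos_div_sin {c d y : ℝ} (hy : sin (c * y + d) ≠ 0) :
    HasDerivAt (fun y => c * cos (c * y + d) / sin (c * y + d))
      (-c ^ 2 - (c * cos (c * y + d) / sin (c * y + d)) ^ 2) y := by
  have hlin : HasDerivAt (fun y => c * y + d) c y := by
    simpa using ((hasDerivAt_id y).const_mul c).add_const d
  refine ((hlin.cos.const_mul c).fun_div hlin.sin hy).congr_deriv ?_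
  field_simp

/-- Wirtinger's inequality. -/
theorem sq_pi_div_mul_integral_sq_le_integral_derivWithin_sq (hab : a < b)
    (hf : ContDiffOn ℝ 1 f (Icc a b)) (hfa : f a = 0) (hfb : f b = 0) :
    (π / (b - a)) ^ 2 * ∫ x in a..b, f x ^ 2 ≤ ∫ x in a..b, derivWithin f (Icc a b) x ^ 2 := by
  have hπ : 0 < π / (b - a) := div_pos pi_pos (sub_pos.2 hab)
  -- For `0 < c < π / (b - a)` the shifted cotangent `c cot (c y + d)`, with `c y + d ∈ (0, π)`
  -- on `[a, b]`, solves `φ' = -c² - φ²` up to the endpoints; the sharp constant is the limit.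
  have hc : ∀ c ∈ Ioo 0 (π / (b - a)),
      c ^ 2 * ∫ x in a..b, f x ^ 2 ≤ ∫ x in a..b, derivWithin f (Icc a b) x ^ 2 := by
    rintro c ⟨hc0, hcπ⟩
    have hcba : c * (b - a) < π := (lt_div_iff₀ (sub_pos.2 hab)).1 hcπ
    have hsin : ∀ y ∈ Icc a b, sin (c * y + ((π - c * (b - a)) / 2 - c * a)) ≠ 0 :=
      fun y hy => by
        have := mul_le_mul_of_nonneg_left hy.1 hc0.le
        have := mul_le_mul_of_nonneg_left hy.2 hc0.le
        exact (sin_pos_of_pos_of_lt_pi (by linarith) (by linarith)).ne'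
    exact mul_integral_sq_le_integral_deriv_sq_of_riccati hab.le hf.continuousOn
      (hf.continuousOn_derivWithin (uniqueDiffOn_Icc hab) le_rfl)
      (fun x hx => (hf.differentiableOn one_ne_zero).hasDerivAt_derivWithin_Icc hx) hfa hfb
      (fun y hy => (hasDerivAt_mul_cos_div_sin (hsin y hy)).continuousAt.continuousWithinAt)
      (fun y hy => hasDerivAt_mul_cos_div_sin (hsin y (Ioo_subset_Icc_self hy)))
  have hlim : Tendsto (fun c : ℝ => c ^ 2 * ∫ x in a..b, f x ^ 2) (𝓝[<] (π / (b - a)))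
      (𝓝 ((π / (b - a)) ^ 2 * ∫ x in a..b, f x ^ 2)) :=
    (((continuous_pow 2).mul continuous_const).tendsto _).mono_left nhdsWithin_le_nhds
  exact le_of_tendsto hlim (eventually_of_mem (Ioo_mem_nhdsLT hπ) hc)

theorem integral_mul_derivWithin_mul_derivWithin_eq_neg {g : ℝ → ℝ} (hab : a < b)
    (hf : ContDiffOn ℝ 2 f (Icc a b)) (hg : ContDiffOn ℝ 1 g (Icc a b))
    (hfa : f a = 0) (hfb : f b = 0) :
    ∫ x in a..b, f x * derivWithin (fun y => g y * derivWithin f (Icc a b) y) (Icc a b) x =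
      -∫ x in a..b, g x * derivWithin f (Icc a b) x ^ 2 := by
  have hs := uniqueDiffOn_Icc hab
  have hf' : ContDiffOn ℝ 1 (derivWithin f (Icc a b)) (Icc a b) := hf.derivWithin hs le_rfl
  have hflux : ContDiffOn ℝ 1 (fun y => g y * derivWithin f (Icc a b) y) (Icc a b) := hg.mul hf'
  rw [integral_mul_deriv_eq_neg_deriv_mul_of_eq_zero hab.le
    (fun x hx => ((hf.differentiableOn two_ne_zero) x hx).hasDerivWithinAt)
    (fun x hx => ((hflux.differentiableOn one_ne_zero) x hx).hasDerivWithinAt)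
    hf'.continuousOn (hflux.continuousOn_derivWithin hs le_rfl) hfa hfb]
  congr 1
  exact integral_congr fun x _ => by ring

theorem integral_mul_mul_derivWithin_eq_neg_half {w : ℝ → ℝ} (hab : a < b)
    (hf : ContDiffOn ℝ 1 f (Icc a b)) (hw : ContDiffOn ℝ 1 w (Icc a b))
    (hfa : f a = 0) (hfb : f b = 0) :
    ∫ x in a..b, w x * f x * derivWithin f (Icc a b) x =
      -(1 / 2) * ∫ x in a..b, derivWithin w (Icc a b) x * f x ^ 2 := by
  have hs := uniqueDiffOn_Icc hab
  have hf' := hf.continuousOn_derivWithin hs le_rfl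
  have hw' := hw.continuousOn_derivWithin hs le_rfl
  have hfc := hf.continuousOn
  have hwc := hw.continuousOn
  have hibp := integral_mul_deriv_eq_neg_deriv_mul_of_eq_zero hab.le
    (fun x hx => ((hw.differentiableOn one_ne_zero) x hx).hasDerivWithinAt.mul
      ((hf.differentiableOn one_ne_zero) x hx).hasDerivWithinAt)
    (fun x hx => ((hf.differentiableOn one_ne_zero) x hx).hasDerivWithinAt)
    (by fun_prop) hf' (by simp [hfa]) (by simp [hfb])
  have hsplit : ∫ x in a..b,
      (derivWithin w (Icc a b) x * f x + w x * derivWithin f (Icc a b) x) * f x =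
      (∫ x in a..b, derivWithin w (Icc a b) x * f x ^ 2) +
        ∫ x in a..b, w x * f x * derivWithin f (Icc a b) x := by
    rw [← intervalIntegral.integral_add]
    · exact integral_congr fun x _ => by ring
    all_goals exact ContinuousOn.intervalIntegrable_of_Icc hab.le (by fun_prop)
  simp only [Pi.mul_apply, hsplit] at hibp
  linarith

theorem integral_mul_reactionConvectionDiffusion_le {Λ lam : ℝ} {α w g : ℝ → ℝ} (hab : a < b)
    (hΛ : 0 ≤ Λ) (hα : ContinuousOn α (Icc a b)) (hw : ContDiffOn ℝ 1 w (Icc a b))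
    (hg : ContDiffOn ℝ 1 g (Icc a b)) (hf : ContDiffOn ℝ 2 f (Icc a b))
    (hfa : f a = 0) (hfb : f b = 0) (hgΛ : ∀ x ∈ Icc a b, Λ ≤ g x)
    (hrate : ∀ x ∈ Icc a b, -α x + 1 / 2 * derivWithin w (Icc a b) x ≤ lam) :
    ∫ x in a..b, f x * (derivWithin (fun y => g y * derivWithin f (Icc a b) y) (Icc a b) x
        - α x * f x - w x * derivWithin f (Icc a b) x)
      ≤ (lam - Λ * (π / (b - a)) ^ 2) * ∫ x in a..b, f x ^ 2 := by
  have hs := uniqueDiffOn_Icc hab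
  have hf1 : ContDiffOn ℝ 1 f (Icc a b) := hf.of_le one_le_two
  have hf'1 : ContDiffOn ℝ 1 (derivWithin f (Icc a b)) (Icc a b) := hf.derivWithin hs le_rfl
  have hfc := hf.continuousOn
  have hf'c := hf'1.continuousOn
  have hgc := hg.continuousOn
  have hwc := hw.continuousOn
  have hw'c := hw.continuousOn_derivWithin hs le_rfl
  have hDc := (hg.mul hf'1).continuousOn_derivWithin hs le_rfl
  have hdiffusion := integral_mul_derivWithin_mul_derivWithin_eq_neg hab hf hg hfa hfb
  have hconvection := integral_mul_mul_derivWithin_eq_neg_half hab hf1 hw hfa hfb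
  have hwirtinger := sq_pi_div_mul_integral_sq_le_integral_derivWithin_sq hab hf1 hfa hfb
  set f' := derivWithin f (Icc a b)
  set w' := derivWithin w (Icc a b)
  set D := derivWithin (fun y => g y * f' y) (Icc a b)
  have hsplit : ∫ x in a..b, f x * (D x - α x * f x - w x * f' x) =
      (∫ x in a..b, f x * D x) - (∫ x in a..b, α x * f x ^ 2) - ∫ x in a..b, w x * f x * f' x := by
    rw [← intervalIntegral.integral_sub, ← intervalIntegral.integral_sub]
    · exact integral_congr fun x _ => by ring
    all_goals exact ContinuousOn.intervalIntegrable_of_Icc hab.le (by fun_prop)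
  have hbound : -(∫ x in a..b, g x * f' x ^ 2) - (∫ x in a..b, α x * f x ^ 2) +
      1 / 2 * (∫ x in a..b, w' x * f x ^ 2) ≤
      -(Λ * ∫ x in a..b, f' x ^ 2) + lam * ∫ x in a..b, f x ^ 2 := by
    rw [← intervalIntegral.integral_neg, ← intervalIntegral.integral_const_mul,
      ← intervalIntegral.integral_const_mul, ← intervalIntegral.integral_const_mul,
      ← intervalIntegral.integral_neg, ← intervalIntegral.integral_sub,
      ← intervalIntegral.integral_add, ← intervalIntegral.integral_add]
    · refine integral_mono_on hab.le ?_ ?_ fun x hx => ?_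
      rotate_left 2
      · nlinarith [mul_le_mul_of_nonneg_right (hgΛ x hx) (sq_nonneg (f' x)),
          mul_le_mul_of_nonneg_right (hrate x hx) (sq_nonneg (f x))]
      all_goals exact ContinuousOn.intervalIntegrable_of_Icc hab.le (by fun_prop)
    all_goals exact ContinuousOn.intervalIntegrable_of_Icc hab.le (by fun_prop)
  linarith [mul_le_mul_of_nonneg_left hwirtinger hΛ]

end Interval

theorem le_exp_mul_mul_of_hasDerivAt_le_s15 {F F' : ℝ → ℝ} {K : ℝ}
    (hF : ∀ t ≥ 0, HasDerivAt F (F' t) t) (hle : ∀ t ≥ 0, F' t ≤ K * F t) :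
    ∀ t ≥ 0, F t ≤ exp (K * t) * F 0 := by
  intro t ht
  have := le_gronwallBound_of_liminf_deriv_right_le (a := 0) (b := t) (δ := F 0) (ε := 0)
    (fun s hs => (hF s hs.1).continuousAt.continuousWithinAt)
    (fun s hs r hr => (hF s hs.1).hasDerivWithinAt.liminf_right_slope_le hr) le_rfl
    (fun s hs => by simpa using hle s hs.1) t ⟨ht, le_rfl⟩
  rwa [gronwallBound_ε0, sub_zero, mul_comm] at this

section Slices

variable {s : Set ℝ} {F : ℝ → ℝ → ℝ}

theorem ContDiffOn.comp_prodMk_const {n : WithTop ℕ∞}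
    (hF : ContDiffOn ℝ n (fun p : ℝ × ℝ => F p.1 p.2) (s ×ˢ univ)) (t : ℝ) :
    ContDiffOn ℝ n (fun x => F x t) s :=
  hF.comp (contDiff_id.prodMk contDiff_const).contDiffOn fun _ hx => ⟨hx, mem_univ t⟩

theorem ContDiffOn.hasDerivAt_snd (hF : ContDiffOn ℝ 1 (fun p : ℝ × ℝ => F p.1 p.2) (s ×ˢ univ))
    {x : ℝ} (hx : x ∈ s) (t : ℝ) :
    HasDerivAt (F x) (fderivWithin ℝ (fun p : ℝ × ℝ => F p.1 p.2) (s ×ˢ univ) (x, t) (0, 1)) t := by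
  have hline : HasDerivAt (fun r : ℝ => (x, r)) ((0 : ℝ), (1 : ℝ)) t :=
    (hasDerivAt_const t x).prodMk (hasDerivAt_id t)
  have := ((hF.differentiableOn one_ne_zero) (x, t) ⟨hx, mem_univ t⟩).hasFDerivWithinAt
    |>.comp_hasDerivWithinAt t (hline.hasDerivWithinAt (s := univ)) fun r _ => ⟨hx, mem_univ r⟩
  simpa [hasDerivWithinAt_univ, Function.comp_def] using this

theorem ContDiffOn.continuousOn_deriv_snd (hs : UniqueDiffOn ℝ s)
    (hF : ContDiffOn ℝ 1 (fun p : ℝ × ℝ => F p.1 p.2) (s ×ˢ univ)) :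
    ContinuousOn (fun p : ℝ × ℝ => deriv (F p.1) p.2) (s ×ˢ univ) :=
  ((hF.continuousOn_fderivWithin (hs.prod uniqueDiffOn_univ) le_rfl).clm_apply
    continuousOn_const).congr fun p hp => (hF.hasDerivAt_snd hp.1 p.2).deriv

theorem hasDerivAt_intervalIntegral_of_contDiffOn {a b : ℝ} (hab : a < b)
    (hF : ContDiffOn ℝ 1 (fun p : ℝ × ℝ => F p.1 p.2) (Icc a b ×ˢ univ)) (t : ℝ) :
    HasDerivAt (fun t => ∫ x in a..b, F x t) (∫ x in a..b, deriv (F x) t) t := by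
  have hsub : uIoc a b ⊆ Icc a b := by
    rw [uIoc_of_le hab.le]
    exact Ioc_subset_Icc_self
  have hF'c := hF.continuousOn_deriv_snd (uniqueDiffOn_Icc hab)
  obtain ⟨C, hC⟩ := (isCompact_Icc.prod (isCompact_Icc (a := t - 1) (b := t + 1)))
    |>.exists_bound_of_continuousOn (hF'c.mono (prod_mono_right (subset_univ _)))
  have hball : Metric.ball t 1 ⊆ Icc (t - 1) (t + 1) := by
    rw [Real.ball_eq_Ioo]
    exact Ioo_subset_Icc_self
  refine (hasDerivAt_integral_of_dominated_loc_of_deriv_le (bound := fun _ => C)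
    (Metric.ball_mem_nhds t one_pos) (Eventually.of_forall fun r => ?_) ?_ ?_
    (Eventually.of_forall fun x hx r hr => hC (x, r) ⟨hsub hx, hball hr⟩)
    intervalIntegrable_const
    (Eventually.of_forall fun x hx r _ =>
      (hF.hasDerivAt_snd (hsub hx) r).differentiableAt.hasDerivAt)).2
  · exact ((hF.comp_prodMk_const r).continuousOn.mono hsub).aestronglyMeasurable measurableSet_uIoc
  · exact (hF.comp_prodMk_const t).continuousOn.intervalIntegrable_of_Icc hab.le
  · exact ((hF'c.comp (continuous_id.prodMk continuous_const).continuousOn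
      fun x hx => ⟨hx, mem_univ t⟩).mono hsub).aestronglyMeasurable measurableSet_uIoc

end Slices

theorem hasDerivAt_intervalIntegral_sq {a b : ℝ} {u : ℝ → ℝ → ℝ} (hab : a < b)
    (hu : ContDiffOn ℝ 1 (fun p : ℝ × ℝ => u p.1 p.2) (Icc a b ×ˢ univ)) (t : ℝ) :
    HasDerivAt (fun t => ∫ x in a..b, u x t ^ 2) (2 * ∫ x in a..b, u x t * deriv (u x) t) t := by
  convert hasDerivAt_intervalIntegral_of_contDiffOn (F := fun x t => u x t ^ 2) hab (hu.pow 2) t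
    using 1
  rw [← intervalIntegral.integral_const_mul]
  refine integral_congr fun x hx => ?_
  rw [uIcc_of_le hab.le] at hx
  rw [((hu.hasDerivAt_snd hx t).differentiableAt.hasDerivAt.fun_pow 2).deriv]
  ring

theorem reaction_convection_diffusion_contraction_1d (L Λ lam : ℝ) (hL : 0 < L) (hΛ : 0 ≤ Λ)
    (a v A u : ℝ → ℝ → ℝ)
    (ha : ContDiffOn ℝ 1 (fun p : ℝ × ℝ => a p.1 p.2) (Icc 0 L ×ˢ univ))
    (hv : ContDiffOn ℝ 1 (fun p : ℝ × ℝ => v p.1 p.2) (Icc 0 L ×ˢ univ))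
    (hA : ContDiffOn ℝ 1 (fun p : ℝ × ℝ => A p.1 p.2) (Icc 0 L ×ˢ univ))
    (hAΛ : ∀ x ∈ Icc (0 : ℝ) L, ∀ t ≥ (0 : ℝ), Λ ≤ A x t)
    (hrate : ∀ x ∈ Icc (0 : ℝ) L, ∀ t ≥ (0 : ℝ),
      -(a x t) + (1 / 2) * derivWithin (fun y => v y t) (Icc 0 L) x ≤ lam)
    (hu : ContDiffOn ℝ 2 (fun p : ℝ × ℝ => u p.1 p.2) (Icc 0 L ×ˢ univ))
    (hpde : ∀ x ∈ Icc 0 L, ∀ t ≥ (0 : ℝ),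
      deriv (fun s => u x s) t + a x t * u x t
          + v x t * derivWithin (fun y => u y t) (Icc 0 L) x =
        derivWithin (fun y => A y t * derivWithin (fun z => u z t) (Icc 0 L) y) (Icc 0 L) x)
    (hbc0 : ∀ t ≥ (0 : ℝ), u 0 t = 0) (hbcL : ∀ t ≥ (0 : ℝ), u L t = 0) :
    ∀ t ≥ (0 : ℝ),
      (∫ x in (0 : ℝ)..L, (u x t) ^ 2)
        ≤ exp (2 * (lam - Λ * π ^ 2 / L ^ 2) * t) * ∫ x in (0 : ℝ)..L, (u x 0) ^ 2 := by
  refine le_exp_mul_mul_of_hasDerivAt_le_s15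
    (fun t _ => hasDerivAt_intervalIntegral_sq hL (hu.of_le one_le_two) t) fun t ht => ?_
  have hdissipation := integral_mul_reactionConvectionDiffusion_le hL hΛ
    (ha.comp_prodMk_const t).continuousOn (hv.comp_prodMk_const t) (hA.comp_prodMk_const t)
    (hu.comp_prodMk_const t) (hbc0 t ht) (hbcL t ht) (fun x hx => hAΛ x hx t ht)
    (fun x hx => hrate x hx t ht)
  have hut : ∫ x in (0 : ℝ)..L, u x t * deriv (u x) t =
      ∫ x in (0 : ℝ)..L, u x t *
        (derivWithin (fun y => A y t * derivWithin (fun z => u z t) (Icc 0 L) y) (Icc 0 L) x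
          - a x t * u x t - v x t * derivWithin (fun y => u y t) (Icc 0 L) x) :=
    integral_congr fun x hx => by
      rw [uIcc_of_le hL.le] at hx
      rw [← hpde x hx t ht]
      ring
  rw [sub_zero, div_pow, ← hut] at hdissipation
  rw [mul_div_assoc]
  linarith
end

section
/- Let G : ℝ^m → ℝ^m be continuously differentiable and monotone, i.e. ⟨G(p) − G(q), p − q⟩ ≥ 0 for all p, q ∈ ℝ^m. Let φ₁, φ₂ : ℝ^m × ℝ → ℝ be twice continuously differentiable solutions of the nonlinear diffusion equation ∂φ/∂t(x,t) = div_x ( G(∇φ(x,t)) ) such that φ₁(·,t) − φ₂(·,t) is supported in a fixed compact set K ⊆ ℝ^m for every t. Then t ↦ ∫_{ℝ^m} (φ₁(x,t) − φ₂(x,t))² dx is differentiable with derivative d/dt ∫_{ℝ^m} (φ₁ − φ₂)² dx = −2 ∫_{ℝ^m} ⟨ G(∇φ₁) − G(∇φ₂), ∇φ₁ − ∇φ₂ ⟩ dx ≤ 0; in particular the squared L² distance between the two solutions is nonincreasing (semi-contraction). -/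
/-!
Differentiating under the integral sign, which is legitimate because `w = φ₁ - φ₂` is `C¹` and
supported in a fixed compact set, gives `d/dt ∫ w² = 2 ∫ w ∂ₜw`, and by the equation
`∂ₜw = div (G (∇φ₁) - G (∇φ₂))`. Integrating by parts, with no boundary term since `w` has compact
support, turns this into `-2 ∫ ⟪G (∇φ₁) - G (∇φ₂), ∇φ₁ - ∇φ₂⟫`, which is `≤ 0` because `G` is
monotone.
-/

open MeasureTheory RealInnerProductSpace Function

theorem hasDerivAt_integral_of_support_subset
    {X E : Type*} [TopologicalSpace X] [T2Space X] [MeasurableSpace X] [OpensMeasurableSpace X]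
    [NormedAddCommGroup E] [NormedSpace ℝ E] [SecondCountableTopologyEither X E]
    (μ : Measure X) [IsFiniteMeasureOnCompacts μ]
    {F F' : X × ℝ → E} (hF : Continuous F) (hF' : Continuous F')
    (hderiv : ∀ x t, HasDerivAt (fun s => F (x, s)) (F' (x, t)) t)
    {K : Set X} (hK : IsCompact K) (hsupp : ∀ t, support (fun x => F (x, t)) ⊆ K) (t : ℝ) :
    HasDerivAt (fun s => ∫ x, F (x, s) ∂μ) (∫ x, F' (x, t) ∂μ) t := by
  have hF'_supp : ∀ s, ∀ x ∉ K, F' (x, s) = 0 := fun s x hx => by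
    have hzero : (fun s => F (x, s)) = fun _ => 0 :=
      funext fun s => notMem_support.1 fun h => hx (hsupp s h)
    exact (hderiv x s).unique (hzero ▸ hasDerivAt_const s 0)
  obtain ⟨C, hC⟩ :=
    (hK.prod (isCompact_closedBall t 1)).exists_bound_of_continuousOn hF'.continuousOn
  have hslice : ∀ {H : X × ℝ → E}, Continuous H → ∀ s, Continuous fun x => H (x, s) :=
    fun hH s => hH.comp (continuous_id.prodMk continuous_const)
  refine (hasDerivAt_integral_of_dominated_loc_of_deriv_le (bound := K.indicator fun _ => C)
    (Metric.ball_mem_nhds t one_pos) (.of_forall fun s => (hslice hF s).aestronglyMeasurable)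
    ((hslice hF t).integrable_of_hasCompactSupport
      (HasCompactSupport.intro hK fun x hx => notMem_support.1 fun h => hx (hsupp t h)))
    (hslice hF' t).aestronglyMeasurable (.of_forall fun x s hs => ?_)
    ((integrable_indicator_iff hK.isClosed.measurableSet).2
      (integrableOn_const hK.measure_lt_top.ne))
    (.of_forall fun x s _ => hderiv x s)).2
  by_cases hx : x ∈ K
  · rw [Set.indicator_of_mem hx]
    exact hC (x, s) ⟨hx, Metric.ball_subset_closedBall hs⟩
  · rw [Set.indicator_of_notMem hx, hF'_supp s x hx, norm_zero]

theorem DifferentiableAt.hasDerivAt_comp_prodMk {E F : Type*} [NormedAddCommGroup E]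
    [NormedSpace ℝ E] [NormedAddCommGroup F] [NormedSpace ℝ F] {f : E × ℝ → F} {x : E} {t : ℝ}
    (hf : DifferentiableAt ℝ f (x, t)) :
    HasDerivAt (fun s => f (x, s)) (fderiv ℝ f (x, t) (0, 1)) t :=
  hf.hasFDerivAt.comp_hasDerivAt t ((hasDerivAt_const t x).prodMk (hasDerivAt_id t))

theorem ContDiff.gradient {E : Type*} [NormedAddCommGroup E] [InnerProductSpace ℝ E]
    [CompleteSpace E] {f : E → ℝ} {n k : WithTop ℕ∞} (hf : ContDiff ℝ n f) (hkn : k + 1 ≤ n) :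
    ContDiff ℝ k (gradient f) :=
  (InnerProductSpace.toDual ℝ E).symm.contDiff.comp (hf.fderiv_right hkn)

theorem gradient_fun_sub {𝕜 E : Type*} [RCLike 𝕜] [NormedAddCommGroup E] [InnerProductSpace 𝕜 E]
    [CompleteSpace E] {f g : E → 𝕜} {x : E} (hf : DifferentiableAt 𝕜 f x)
    (hg : DifferentiableAt 𝕜 g x) :
    gradient (fun y => f y - g y) x = gradient f x - gradient g x := by
  simp only [gradient, fderiv_fun_sub hf hg, map_sub]

section Divergence

variable {ι : Type*} [Fintype ι] [DecidableEq ι]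

noncomputable def divergence (V : EuclideanSpace ℝ ι → EuclideanSpace ℝ ι)
    (x : EuclideanSpace ℝ ι) : ℝ :=
  ∑ i, fderiv ℝ (fun y => V y i) x (EuclideanSpace.single i 1)

theorem divergence_fun_sub {V W : EuclideanSpace ℝ ι → EuclideanSpace ℝ ι}
    {x : EuclideanSpace ℝ ι} (hV : DifferentiableAt ℝ V x) (hW : DifferentiableAt ℝ W x) :
    divergence (fun y => V y - W y) x = divergence V x - divergence W x := by
  simp only [divergence, ← Finset.sum_sub_distrib, PiLp.sub_apply]
  refine Finset.sum_congr rfl fun i _ => ?_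
  rw [fderiv_fun_sub ((differentiableAt_piLp 2).1 hV i) ((differentiableAt_piLp 2).1 hW i)]
  rfl

theorem inner_gradient_eq_sum_fderiv_single_mul {u : EuclideanSpace ℝ ι → ℝ}
    (x v : EuclideanSpace ℝ ι) :
    ⟪gradient u x, v⟫ = ∑ i, fderiv ℝ u x (EuclideanSpace.single i 1) * v i := by
  refine (PiLp.inner_apply _ _).trans (Finset.sum_congr rfl fun i _ => ?_)
  rw [← inner_gradient_left, real_inner_comm, EuclideanSpace.inner_single_right]
  simp [mul_comm]

theorem integral_mul_divergence_eq_neg_integral_inner_gradient {u : EuclideanSpace ℝ ι → ℝ}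
    {V : EuclideanSpace ℝ ι → EuclideanSpace ℝ ι} (hu : ContDiff ℝ 1 u)
    (hu_supp : HasCompactSupport u) (hV : ContDiff ℝ 1 V) :
    ∫ x, u x * divergence V x = -∫ x, ⟪gradient u x, V x⟫ := by
  have hVi : ∀ i, ContDiff ℝ 1 fun y => V y i := (contDiff_piLp 2).1 hV
  have hpartial : ∀ {f : EuclideanSpace ℝ ι → ℝ}, ContDiff ℝ 1 f → ∀ v,
      Continuous fun x => fderiv ℝ f x v :=
    fun hf v => (hf.continuous_fderiv one_ne_zero).clm_apply continuous_const
  have hint₁ : ∀ i, Integrable fun x =>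
      u x * fderiv ℝ (fun y => V y i) x (EuclideanSpace.single i 1) := fun i =>
    (hu.continuous.mul (hpartial (hVi i) _)).integrable_of_hasCompactSupport hu_supp.mul_right
  have hint₂ : ∀ i, Integrable fun x => fderiv ℝ u x (EuclideanSpace.single i 1) * V x i :=
    fun i => ((hpartial hu _).mul (hVi i).continuous).integrable_of_hasCompactSupport
      (hu_supp.fderiv_apply (𝕜 := ℝ) _).mul_right
  have hibp : ∀ i, ∫ x, u x * fderiv ℝ (fun y => V y i) x (EuclideanSpace.single i 1) =
      -∫ x, fderiv ℝ u x (EuclideanSpace.single i 1) * V x i := fun i =>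
    integral_mul_fderiv_eq_neg_fderiv_mul_of_integrable (hint₂ i) (hint₁ i)
      ((hu.continuous.mul (hVi i).continuous).integrable_of_hasCompactSupport
        hu_supp.mul_right)
      (fun x _ => hu.differentiable one_ne_zero x)
      (fun x _ => (hVi i).differentiable one_ne_zero x)
  calc ∫ x, u x * divergence V x
      = ∫ x, ∑ i, u x * fderiv ℝ (fun y => V y i) x (EuclideanSpace.single i 1) := by
        simp only [divergence, Finset.mul_sum]
    _ = ∑ i, ∫ x, u x * fderiv ℝ (fun y => V y i) x (EuclideanSpace.single i 1) :=
        integral_finsetSum _ fun i _ => hint₁ i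
    _ = -∑ i, ∫ x, fderiv ℝ u x (EuclideanSpace.single i 1) * V x i := by
        simp only [hibp, Finset.sum_neg_distrib]
    _ = -∫ x, ⟪gradient u x, V x⟫ := by
        simp only [inner_gradient_eq_sum_fderiv_single_mul,
          integral_finsetSum _ fun i _ => hint₂ i]

theorem hasDerivAt_integral_sq_sub_of_diffusion
    (G : EuclideanSpace ℝ ι → EuclideanSpace ℝ ι) (hG : ContDiff ℝ 1 G)
    {φ₁ φ₂ : EuclideanSpace ℝ ι × ℝ → ℝ} (hφ₁ : ContDiff ℝ 2 φ₁) (hφ₂ : ContDiff ℝ 2 φ₂)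
    (hpde₁ : ∀ x t, deriv (fun s => φ₁ (x, s)) t =
      divergence (fun y => G (gradient (fun z => φ₁ (z, t)) y)) x)
    (hpde₂ : ∀ x t, deriv (fun s => φ₂ (x, s)) t =
      divergence (fun y => G (gradient (fun z => φ₂ (z, t)) y)) x)
    {K : Set (EuclideanSpace ℝ ι)} (hK : IsCompact K)
    (hsupp : ∀ t, support (fun x => φ₁ (x, t) - φ₂ (x, t)) ⊆ K) (t : ℝ) :
    HasDerivAt (fun s => ∫ x, (φ₁ (x, s) - φ₂ (x, s)) ^ 2)
      (-2 * ∫ x, ⟪G (gradient (fun z => φ₁ (z, t)) x) - G (gradient (fun z => φ₂ (z, t)) x),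
        gradient (fun z => φ₁ (z, t)) x - gradient (fun z => φ₂ (z, t)) x⟫) t := by
  set w : EuclideanSpace ℝ ι × ℝ → ℝ := fun p => φ₁ p - φ₂ p
  have hw : ContDiff ℝ 1 w := (hφ₁.sub hφ₂).of_le (by norm_num)
  set wt : EuclideanSpace ℝ ι × ℝ → ℝ := fun p => fderiv ℝ w p (0, 1)
  have hw_deriv : ∀ x s, HasDerivAt (fun s => w (x, s)) (wt (x, s)) s := fun x s =>
    (hw.differentiable one_ne_zero _).hasDerivAt_comp_prodMk
  have henergy := hasDerivAt_integral_of_support_subset volume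
    (F := fun p => w p ^ 2) (F' := fun p => 2 * w p * wt p) (hw.continuous.pow 2)
    ((continuous_const.mul hw.continuous).mul
      ((hw.continuous_fderiv one_ne_zero).clm_apply continuous_const))
    (fun x s => by simpa using (hw_deriv x s).fun_pow 2) hK
    (fun s => (support_pow _ two_ne_zero).trans_subset (hsupp s)) t
  have hslice : ∀ {φ : EuclideanSpace ℝ ι × ℝ → ℝ}, ContDiff ℝ 2 φ →
      ContDiff ℝ 2 fun z => φ (z, t) :=
    fun hφ => hφ.comp (contDiff_id.prodMk contDiff_const)
  set g₁ := gradient fun z => φ₁ (z, t)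
  set g₂ := gradient fun z => φ₂ (z, t)
  have hGg₁ : ContDiff ℝ 1 fun y => G (g₁ y) := hG.comp ((hslice hφ₁).gradient le_rfl)
  have hGg₂ : ContDiff ℝ 1 fun y => G (g₂ y) := hG.comp ((hslice hφ₂).gradient le_rfl)
  set u := fun x => w (x, t)
  have hu : ContDiff ℝ 1 u := hw.comp (contDiff_id.prodMk contDiff_const)
  set V := fun y => G (g₁ y) - G (g₂ y)
  have hwt_div : ∀ x, wt (x, t) = divergence V x := fun x => by
    rw [(hw_deriv x t).deriv.symm, deriv_fun_sub, hpde₁, hpde₂,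
      divergence_fun_sub (hGg₁.differentiable one_ne_zero x) (hGg₂.differentiable one_ne_zero x)]
    · exact (hφ₁.differentiable (by norm_num) _).hasDerivAt_comp_prodMk.differentiableAt
    · exact (hφ₂.differentiable (by norm_num) _).hasDerivAt_comp_prodMk.differentiableAt
  have hgrad_u : ∀ x, gradient u x = g₁ x - g₂ x := fun x =>
    gradient_fun_sub ((hslice hφ₁).differentiable (by norm_num) x)
      ((hslice hφ₂).differentiable (by norm_num) x)
  have hibp := integral_mul_divergence_eq_neg_integral_inner_gradient (u := u) (V := V) hu
    (HasCompactSupport.intro hK fun x hx => notMem_support.1 fun h => hx (hsupp t h))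
    (hGg₁.sub hGg₂)
  refine henergy.congr_deriv ?_
  calc ∫ x, 2 * w (x, t) * wt (x, t) = 2 * ∫ x, u x * divergence V x := by
        rw [← integral_const_mul]
        congr 1 with x
        rw [hwt_div, mul_assoc]
    _ = -2 * ∫ x, ⟪gradient u x, V x⟫ := by rw [hibp]; ring
    _ = -2 * ∫ x, ⟪V x, g₁ x - g₂ x⟫ := by simp_rw [hgrad_u, real_inner_comm]

end Divergence

theorem nonlinear_diffusion_semicontraction {m : ℕ}
    (G : EuclideanSpace ℝ (Fin m) → EuclideanSpace ℝ (Fin m))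
    (hG : ContDiff ℝ 1 G)
    (hmono : ∀ p q : EuclideanSpace ℝ (Fin m), 0 ≤ ⟪G p - G q, p - q⟫)
    (φ₁ φ₂ : EuclideanSpace ℝ (Fin m) × ℝ → ℝ)
    (hφ₁ : ContDiff ℝ 2 φ₁) (hφ₂ : ContDiff ℝ 2 φ₂)
    (hpde₁ : ∀ x t, deriv (fun s => φ₁ (x, s)) t =
      ∑ i, fderiv ℝ (fun y => (G (gradient (fun z => φ₁ (z, t)) y)) i) x
        (EuclideanSpace.single i 1))
    (hpde₂ : ∀ x t, deriv (fun s => φ₂ (x, s)) t =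
      ∑ i, fderiv ℝ (fun y => (G (gradient (fun z => φ₂ (z, t)) y)) i) x
        (EuclideanSpace.single i 1))
    (K : Set (EuclideanSpace ℝ (Fin m))) (hK : IsCompact K)
    (hsupp : ∀ t, Function.support (fun x => φ₁ (x, t) - φ₂ (x, t)) ⊆ K) :
    (∀ t, HasDerivAt (fun s => ∫ x, (φ₁ (x, s) - φ₂ (x, s)) ^ 2)
        (-2 * ∫ x, ⟪G (gradient (fun z => φ₁ (z, t)) x) - G (gradient (fun z => φ₂ (z, t)) x),
            gradient (fun z => φ₁ (z, t)) x - gradient (fun z => φ₂ (z, t)) x⟫) t ∧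
      -2 * (∫ x, ⟪G (gradient (fun z => φ₁ (z, t)) x) - G (gradient (fun z => φ₂ (z, t)) x),
            gradient (fun z => φ₁ (z, t)) x - gradient (fun z => φ₂ (z, t)) x⟫) ≤ 0) ∧
    Antitone (fun t => ∫ x, (φ₁ (x, t) - φ₂ (x, t)) ^ 2) := by
  have hderiv := hasDerivAt_integral_sq_sub_of_diffusion G hG hφ₁ hφ₂ hpde₁ hpde₂ hK hsupp
  have hnonpos : ∀ t, -2 * (∫ x, ⟪G (gradient (fun z => φ₁ (z, t)) x) -
      G (gradient (fun z => φ₂ (z, t)) x),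
      gradient (fun z => φ₁ (z, t)) x - gradient (fun z => φ₂ (z, t)) x⟫) ≤ 0 := fun t =>
    mul_nonpos_of_nonpos_of_nonneg (by norm_num) (integral_nonneg fun x => hmono _ _)
  exact ⟨fun t => ⟨hderiv t, hnonpos t⟩, antitone_of_deriv_nonpos
    (fun t => (hderiv t).differentiableAt) fun t => (hderiv t).deriv ▸ hnonpos t⟩
end
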